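/- arXiv:2102.10217 — 4 statements merged into one kernel-verified Lean document; each statement's English description precedes it below -/
import Mathlib

section
/- Lemma 3.3, part 2, column-wise implications (deterministic). Let U and U* be n×r real matrices with orthonormal columns; let B̃ be an r×q real matrix of rank r with columns b̃_k, set x*_k := U*b̃_k, σ⁺ := σ₁(B̃), σ⁻ := σ_r(B̃), κ := σ⁺/σ⁻. Suppose δ satisfies ‖(I − UUᵀ)U*‖_F ≤ δ ≤ 0.1/κ, and suppose the vectors b̂_k ∈ ℝ^r satisfy ‖Uᵀx*_k − b̂_k‖ ≤ 0.4·‖(I − UUᵀ)U*b̃_k‖ for every k ∈ [q]. Set x̂_k := Ub̂_k. Then for every k ∈ [q]: (a) ‖x̂_k − x*_k‖ ≤ 1.4·‖(I − UUᵀ)U*b̃_k‖; (b) ‖Uᵀx*_k − b̂_k‖ ≤ 0.4·δ·‖b̃_k‖ and ‖x̂_k − x*_k‖ ≤ 1.4·δ·‖x*_k‖; (c) ‖U*ᵀUb̂_k − b̃_k‖ ≤ 2.5·δ·‖b̃_k‖; (d) ‖b̂_k‖ ≤ 1.04·‖b̃_k‖; in particular, if additionally max_k ‖b̃_k‖ ≤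 μσ⁺√(r/q) for some μ ≥ 1 (Assumption 1), then ‖b̂_k‖ ≤ 1.1·μσ⁺√(r/q) for all k. -/
open MeasureTheory ProbabilityTheory Matrix
open scoped ENNReal

noncomputable section

/-- Euclidean norm of a finitely-indexed real vector. -/
def vnorm {ι : Type*} [Fintype ι] (v : ι → ℝ) : ℝ := Real.sqrt (∑ i, v i ^ 2)

/-- Frobenius norm of a real matrix. -/
def frob {ι ι' : Type*} [Fintype ι] [Fintype ι'] (M : Matrix ι ι' ℝ) : ℝ :=
  Real.sqrt (∑ i, ∑ j, M i j ^ 2)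

/-- Spectral (ℓ2 operator) norm of a real matrix. -/
def spec {ι ι' : Type*} [Fintype ι] [Fintype ι'] (M : Matrix ι ι' ℝ) : ℝ :=
  sSup {c | ∃ z, vnorm z = 1 ∧ c = vnorm (M.mulVec z)}

/-- Smallest singular value of an r×q matrix with r ≤ q (or of a square matrix):
the minimum of ‖Bᵀw‖ over unit vectors w. -/
def sigMin {ι ι' : Type*} [Fintype ι] [Fintype ι'] (B : Matrix ι ι' ℝ) : ℝ :=
  sInf {c | ∃ w, vnorm w = 1 ∧ c = vnorm (Bᵀ.mulVec w)}

/-- The k-th column of a matrix. -/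
def matCol {ι ι' : Type*} (B : Matrix ι ι' ℝ) (k : ι') : ι → ℝ := fun i => B i k

/-- Subspace distance SD(U₁,U₂) := ‖(I − U₁U₁ᵀ)U₂‖_F. -/
def SD {n r : ℕ} (U₁ U₂ : Matrix (Fin n) (Fin r) ℝ) : ℝ :=
  frob ((1 - U₁ * U₁ᵀ) * U₂)

/-- The standard Gaussian measure on ℝ. -/
def stdGaussian : Measure ℝ := gaussianReal 0 1

instance : IsProbabilityMeasure stdGaussian :=
  inferInstanceAs (IsProbabilityMeasure (gaussianReal 0 1))

/-- A standard Gaussian random vector in ℝⁿ (i.i.d. N(0,1) coordinates). -/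
def gaussianVec (n : ℕ) : Measure (Fin n → ℝ) := Measure.pi fun _ => stdGaussian

instance (n : ℕ) : IsProbabilityMeasure (gaussianVec n) := by
  unfold gaussianVec; infer_instance

/-- i.i.d. standard Gaussian random vectors a_{k i} ∈ ℝⁿ, k ∈ [q], i ∈ [m]. -/
def gaussianMatrices (q m n : ℕ) : Measure (Fin q → Fin m → Fin n → ℝ) :=
  Measure.pi fun _ => Measure.pi fun _ => gaussianVec n

instance (q m n : ℕ) : IsProbabilityMeasure (gaussianMatrices q m n) := by
  unfold gaussianMatrices; infer_instance

/-- Truncated spectral-initialization matrix X̂₀ = (1/m) Σ_{k,i} a_ki y_ki 1{y_ki² ≤ α} e_kᵀ. -/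
def initMat {n q m : ℕ} (xstar : Fin q → Fin n → ℝ) (α : ℝ)
    (ω : Fin q → Fin m → Fin n → ℝ) : Matrix (Fin n) (Fin q) ℝ :=
  Matrix.of fun j k => (1 / (m : ℝ)) * ∑ i, ω k i j * (ω k i ⬝ᵥ xstar k) *
    (if (ω k i ⬝ᵥ xstar k) ^ 2 ≤ α then 1 else 0)

/-- Data-dependent truncation threshold α := C̃ Σ_{k,i} y_ki² / (mq). -/
def initAlpha {n q m : ℕ} (xstar : Fin q → Fin n → ℝ) (Ctil : ℝ)
    (ω : Fin q → Fin m → Fin n → ℝ) : ℝ :=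
  Ctil * ((∑ k, ∑ i, (ω k i ⬝ᵥ xstar k) ^ 2) / ((m : ℝ) * q))

/-- β(α) := E[ζ² 1{‖x‖² ζ² ≤ α}] for ζ standard Gaussian. -/
def betaK (normx α : ℝ) : ℝ :=
  ∫ z, z ^ 2 * (if normx ^ 2 * z ^ 2 ≤ α then 1 else 0) ∂stdGaussian

/-- The least-squares estimate b̂ := (UᵀAᵀAU)⁻¹ Uᵀ Aᵀ A x. -/
def lsEst {n r m : ℕ} (U : Matrix (Fin n) (Fin r) ℝ) (A : Matrix (Fin m) (Fin n) ℝ)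
    (x : Fin n → ℝ) : Fin r → ℝ :=
  ((Uᵀ * Aᵀ * A * U)⁻¹ * Uᵀ * Aᵀ * A).mulVec x

/-- Gradient w.r.t. U of the squared loss: Σ_k Aᵀ(AUb̂_k − Ax*_k)b̂_kᵀ. -/
def gradU {n r q m : ℕ} (U : Matrix (Fin n) (Fin r) ℝ)
    (A : Fin q → Matrix (Fin m) (Fin n) ℝ) (xstar : Fin q → Fin n → ℝ)
    (bhat : Fin q → Fin r → ℝ) : Matrix (Fin n) (Fin r) ℝ :=
  ∑ k, (A k)ᵀ * vecMulVec ((A k).mulVec (U.mulVec (bhat k) - xstar k)) (bhat k)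

/-- `U` has orthonormal columns whose span is the span of eigenvectors of `S`
corresponding to its `r` largest eigenvalues: `S` maps the column span of `U` into itself,
and wᵀSw ≥ zᵀSz for unit w in the span and unit z orthogonal to it. -/
def IsTopREigenBasis {n r : ℕ} (S : Matrix (Fin n) (Fin n) ℝ)
    (U : Matrix (Fin n) (Fin r) ℝ) : Prop :=
  Uᵀ * U = 1 ∧ (∃ M : Matrix (Fin r) (Fin r) ℝ, S * U = U * M) ∧
  ∀ w z : Fin n → ℝ, (∃ cvec : Fin r → ℝ, w = U.mulVec cvec) → Uᵀ.mulVec z = 0 →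
    vnorm w = 1 → vnorm z = 1 → z ⬝ᵥ S.mulVec z ≤ w ⬝ᵥ S.mulVec w

/-- Sample sizes for the 2T+1 sample splits: batch τ ∈ {0,…,T} has m τ rows,
batch τ = T + t (t ∈ {1,…,T}) has m t rows. -/
def msize (m : ℕ → ℕ) (T τ : ℕ) : ℕ := if τ ≤ T then m τ else m (τ - T)

/-- The joint distribution of all 2T+1 independent sample batches of i.i.d. standard
Gaussian measurement vectors. -/
def splitGauss (m : ℕ → ℕ) (T q n : ℕ) :
    Measure (∀ τ : Fin (2 * T + 1), Fin q → Fin (msize m T τ.1) → Fin n → ℝ) :=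
  Measure.pi fun τ => gaussianMatrices q (msize m T τ.1) n

instance (m : ℕ → ℕ) (T q n : ℕ) : IsProbabilityMeasure (splitGauss m T q n) := by
  unfold splitGauss; infer_instance

end

/-! The bounds follow from the triangle inequality after splitting `x̂_k − x*_k` into its component
`U(b̂_k − Uᵀx*_k)` in the span of `U` and the residual `−(I − UUᵀ)x*_k`; the residual is at most
`δ‖b̃_k‖` because `‖x*_k‖ = ‖b̃_k‖`, and `κ ≥ 1` turns `δ ≤ 0.1/κ` into `δ ≤ 0.1`. -/

section Vnorm

variable {ι ι' : Type*} [Fintype ι] [Fintype ι']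

lemma vnorm_eq_norm (v : ι → ℝ) : vnorm v = ‖(WithLp.toLp 2 v : EuclideanSpace ℝ ι)‖ := by
  simp [EuclideanSpace.norm_eq, vnorm]

lemma vnorm_nonneg (v : ι → ℝ) : 0 ≤ vnorm v := Real.sqrt_nonneg _

lemma vnorm_sub_le (v w : ι → ℝ) : vnorm (v - w) ≤ vnorm v + vnorm w := by
  simpa only [vnorm_eq_norm, WithLp.toLp_sub] using norm_sub_le _ _

lemma vnorm_sub_comm (v w : ι → ℝ) : vnorm (v - w) = vnorm (w - v) := by
  simpa only [vnorm_eq_norm, WithLp.toLp_sub] using norm_sub_rev _ _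

lemma vnorm_smul (c : ℝ) (v : ι → ℝ) : vnorm (c • v) = |c| * vnorm v := by
  simp only [vnorm_eq_norm, WithLp.toLp_smul, norm_smul, Real.norm_eq_abs]

lemma vnorm_sq (v : ι → ℝ) : vnorm v ^ 2 = v ⬝ᵥ v := by
  rw [vnorm, Real.sq_sqrt (by positivity)]
  simp only [dotProduct, sq]

lemma dotProduct_le_vnorm_mul_vnorm (v w : ι → ℝ) : v ⬝ᵥ w ≤ vnorm v * vnorm w := by
  simpa only [vnorm_eq_norm, EuclideanSpace.inner_toLp_toLp, star_trivial, dotProduct_comm w v]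
    using real_inner_le_norm (WithLp.toLp 2 v : EuclideanSpace ℝ ι) (WithLp.toLp 2 w)

lemma vnorm_mulVec_le_frob_mul (M : Matrix ι ι' ℝ) (v : ι' → ℝ) :
    vnorm (M *ᵥ v) ≤ frob M * vnorm v := by
  rw [vnorm, frob, vnorm, ← Real.sqrt_mul (by positivity), Finset.sum_mul]
  exact Real.sqrt_le_sqrt <| Finset.sum_le_sum fun i _ =>
    Finset.sum_mul_sq_le_sq_mul_sq Finset.univ _ _

end Vnorm

section SingularValues

variable {ι ι' : Type*} [Fintype ι] [Fintype ι']

lemma spec_nonneg (M : Matrix ι ι' ℝ) : 0 ≤ spec M :=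
  Real.sSup_nonneg <| by rintro c ⟨z, -, rfl⟩; exact vnorm_nonneg _

lemma vnorm_mulVec_le_spec (M : Matrix ι ι' ℝ) {z : ι' → ℝ} (hz : vnorm z = 1) :
    vnorm (M *ᵥ z) ≤ spec M := by
  refine le_csSup ⟨frob M, ?_⟩ ⟨z, hz, rfl⟩
  rintro c ⟨w, hw, rfl⟩
  simpa only [hw, mul_one] using vnorm_mulVec_le_frob_mul M w

lemma vnorm_mulVec_le_spec_mul (M : Matrix ι ι' ℝ) (z : ι' → ℝ) :
    vnorm (M *ᵥ z) ≤ spec M * vnorm z := by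
  rcases (vnorm_nonneg z).eq_or_lt with hz | hz
  · have : z = 0 := by
      simpa only [vnorm_eq_norm, norm_eq_zero, WithLp.toLp_eq_zero] using hz.symm
    simp only [this, mulVec_zero, mul_zero, vnorm_eq_norm, WithLp.toLp_zero, norm_zero,
      le_refl]
  · have hunit : vnorm ((vnorm z)⁻¹ • z) = 1 := by
      rw [vnorm_smul, abs_inv, abs_of_pos hz, inv_mul_cancel₀ hz.ne']
    calc vnorm (M *ᵥ z) = vnorm z * vnorm (M *ᵥ ((vnorm z)⁻¹ • z)) := by
          rw [mulVec_smul, vnorm_smul, abs_inv, abs_of_pos hz, mul_inv_cancel_left₀ hz.ne']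
      _ ≤ vnorm z * spec M := by gcongr; exact vnorm_mulVec_le_spec M hunit
      _ = spec M * vnorm z := mul_comm _ _

lemma vnorm_transpose_mulVec_sq_le (M : Matrix ι ι' ℝ) (w : ι → ℝ) :
    vnorm (Mᵀ *ᵥ w) ^ 2 ≤ vnorm w * vnorm (M *ᵥ (Mᵀ *ᵥ w)) := by
  rw [vnorm_sq, dotProduct_mulVec, vecMul_transpose, dotProduct_comm]
  exact dotProduct_le_vnorm_mul_vnorm _ _

lemma vnorm_transpose_mulVec_le_spec_mul (M : Matrix ι ι' ℝ) (w : ι → ℝ) :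
    vnorm (Mᵀ *ᵥ w) ≤ spec M * vnorm w := by
  have h := (vnorm_transpose_mulVec_sq_le M w).trans
    (mul_le_mul_of_nonneg_left (vnorm_mulVec_le_spec_mul M (Mᵀ *ᵥ w)) (vnorm_nonneg w))
  nlinarith [mul_nonneg (spec_nonneg M) (vnorm_nonneg w)]

lemma sigMin_nonneg (B : Matrix ι ι' ℝ) : 0 ≤ sigMin B :=
  Real.sInf_nonneg <| by rintro c ⟨w, -, rfl⟩; exact vnorm_nonneg _

lemma sigMin_le_spec (B : Matrix ι ι' ℝ) : sigMin B ≤ spec B := by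
  rcases Set.eq_empty_or_nonempty {c | ∃ w, vnorm w = 1 ∧ c = vnorm (Bᵀ *ᵥ w)} with
    h | ⟨_, w, hw, rfl⟩
  · rw [sigMin, h, Real.sInf_empty]
    exact spec_nonneg B
  · calc sigMin B ≤ vnorm (Bᵀ *ᵥ w) :=
          csInf_le ⟨0, by rintro c ⟨v, -, rfl⟩; exact vnorm_nonneg _⟩ ⟨w, hw, rfl⟩
      _ ≤ spec B * vnorm w := vnorm_transpose_mulVec_le_spec_mul B w
      _ = spec B := by rw [hw, mul_one]

end SingularValues

lemma div_div_le_self {a b x : ℝ} (hx : 0 ≤ x) (ha : 0 ≤ a) (hab : a ≤ b) :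
    x / (b / a) ≤ x := by
  rw [div_div_eq_mul_div]
  exact div_le_of_le_mul₀ (ha.trans hab) hx (mul_le_mul_of_nonneg_left hab hx)

section Orthonormal

variable {ι ι' : Type*} [Fintype ι] [Fintype ι'] [DecidableEq ι'] {U : Matrix ι ι' ℝ}

lemma vnorm_mulVec_of_orthonormal (hU : Uᵀ * U = 1) (v : ι' → ℝ) :
    vnorm (U *ᵥ v) = vnorm v := by
  refine (pow_left_inj₀ (vnorm_nonneg _) (vnorm_nonneg _) two_ne_zero).mp ?_
  rw [vnorm_sq, vnorm_sq, dotProduct_mulVec, ← mulVec_transpose, mulVec_mulVec, hU, one_mulVec]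

lemma vnorm_transpose_mulVec_le_of_orthonormal (hU : Uᵀ * U = 1) (y : ι → ℝ) :
    vnorm (Uᵀ *ᵥ y) ≤ vnorm y := by
  have h := vnorm_transpose_mulVec_sq_le U y
  rw [vnorm_mulVec_of_orthonormal hU] at h
  nlinarith [vnorm_nonneg y]

lemma vnorm_le_vnorm_add_vnorm_transpose_mulVec_sub (hU : Uᵀ * U = 1) (x : ι → ℝ)
    (b : ι' → ℝ) : vnorm b ≤ vnorm x + vnorm (Uᵀ *ᵥ x - b) := by
  have h := vnorm_sub_le (Uᵀ *ᵥ x) (Uᵀ *ᵥ x - b)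
  rw [sub_sub_cancel] at h
  linarith [vnorm_transpose_mulVec_le_of_orthonormal hU x]

lemma vnorm_transpose_mulVec_sub_le (hU : Uᵀ * U = 1) (y : ι → ℝ) (b : ι' → ℝ) :
    vnorm (Uᵀ *ᵥ y - b) ≤ vnorm (y - U *ᵥ b) := by
  have h : Uᵀ *ᵥ y - b = Uᵀ *ᵥ (y - U *ᵥ b) := by
    rw [mulVec_sub, mulVec_mulVec, hU, one_mulVec]
  rw [h]
  exact vnorm_transpose_mulVec_le_of_orthonormal hU _

variable [DecidableEq ι]

lemma vnorm_mulVec_sub_le_of_orthonormal (hU : Uᵀ * U = 1) (x : ι → ℝ) (b : ι' → ℝ) :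
    vnorm (U *ᵥ b - x) ≤ vnorm (Uᵀ *ᵥ x - b) + vnorm ((1 - U * Uᵀ) *ᵥ x) := by
  have h : U *ᵥ b - x = U *ᵥ (b - Uᵀ *ᵥ x) - (1 - U * Uᵀ) *ᵥ x := by
    rw [mulVec_sub, sub_mulVec, one_mulVec, mulVec_mulVec]
    abel
  rw [h, vnorm_sub_comm (Uᵀ *ᵥ x), ← vnorm_mulVec_of_orthonormal hU (b - Uᵀ *ᵥ x)]
  exact vnorm_sub_le _ _

end Orthonormal

theorem lemma33_part2_columns_general (n r q : ℕ) (U Ustar : Matrix (Fin n) (Fin r) ℝ)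
    (Btil : Matrix (Fin r) (Fin q) ℝ) (bhat : Fin q → Fin r → ℝ) (δ : ℝ)
    (hU : Uᵀ * U = 1) (hUs : Ustarᵀ * Ustar = 1)
    (hδ1 : frob ((1 - U * Uᵀ) * Ustar) ≤ δ)
    (hδ2 : δ ≤ 0.1 / (spec Btil / sigMin Btil))
    (hb : ∀ k, vnorm (Uᵀ.mulVec (Ustar.mulVec (matCol Btil k)) - bhat k) ≤
      0.4 * vnorm ((1 - U * Uᵀ).mulVec (Ustar.mulVec (matCol Btil k)))) :
    ∀ k : Fin q,
      vnorm (U.mulVec (bhat k) - Ustar.mulVec (matCol Btil k)) ≤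
        1.4 * vnorm ((1 - U * Uᵀ).mulVec (Ustar.mulVec (matCol Btil k))) ∧
      vnorm (Uᵀ.mulVec (Ustar.mulVec (matCol Btil k)) - bhat k) ≤
        0.4 * δ * vnorm (matCol Btil k) ∧
      vnorm (U.mulVec (bhat k) - Ustar.mulVec (matCol Btil k)) ≤
        1.4 * δ * vnorm (Ustar.mulVec (matCol Btil k)) ∧
      vnorm (Ustarᵀ.mulVec (U.mulVec (bhat k)) - matCol Btil k) ≤
        2.5 * δ * vnorm (matCol Btil k) ∧
      vnorm (bhat k) ≤ 1.04 * vnorm (matCol Btil k) ∧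
      (∀ μ : ℝ, 1 ≤ μ →
        (∀ j, vnorm (matCol Btil j) ≤ μ * spec Btil * Real.sqrt ((r : ℝ) / q)) →
        vnorm (bhat k) ≤ 1.1 * μ * spec Btil * Real.sqrt ((r : ℝ) / q)) := by
  intro k
  specialize hb k
  set b := matCol Btil k
  set x := Ustar *ᵥ b
  have hx : vnorm x = vnorm b := vnorm_mulVec_of_orthonormal hUs b
  have hres : vnorm ((1 - U * Uᵀ) *ᵥ x) ≤ δ * vnorm b := by
    simpa only [x, mulVec_mulVec] using
      (vnorm_mulVec_le_frob_mul _ b).trans (mul_le_mul_of_nonneg_right hδ1 (vnorm_nonneg b))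
  have hδ : δ * vnorm b ≤ 0.1 * vnorm b := by
    refine mul_le_mul_of_nonneg_right (hδ2.trans ?_) (vnorm_nonneg b)
    exact div_div_le_self (by norm_num) (sigMin_nonneg Btil) (sigMin_le_spec Btil)
  have ha : vnorm (U *ᵥ bhat k - x) ≤ 1.4 * vnorm ((1 - U * Uᵀ) *ᵥ x) := by
    linarith [vnorm_mulVec_sub_le_of_orthonormal hU x (bhat k)]
  have hd : vnorm (bhat k) ≤ 1.04 * vnorm b := by
    linarith [vnorm_le_vnorm_add_vnorm_transpose_mulVec_sub hU x (bhat k)]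
  refine ⟨ha, by linarith, by rw [hx]; linarith, ?_, hd, fun μ _ hcol => ?_⟩
  · linarith [vnorm_transpose_mulVec_sub_le hUs (U *ᵥ bhat k) b, vnorm_nonneg ((1 - U * Uᵀ) *ᵥ x)]
  · linarith [hcol k, vnorm_nonneg b]

/-- **Lemma 3.3, part 2, column-wise implications** (deterministic). -/
theorem lemma33_part2_columns (n r q : ℕ) (U Ustar : Matrix (Fin n) (Fin r) ℝ)
    (Btil : Matrix (Fin r) (Fin q) ℝ) (bhat : Fin q → Fin r → ℝ) (δ : ℝ)
    (hU : Uᵀ * U = 1) (hUs : Ustarᵀ * Ustar = 1) (hrank : Btil.rank = r)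
    (hδ1 : frob ((1 - U * Uᵀ) * Ustar) ≤ δ)
    (hδ2 : δ ≤ 0.1 / (spec Btil / sigMin Btil))
    (hb : ∀ k, vnorm (Uᵀ.mulVec (Ustar.mulVec (matCol Btil k)) - bhat k) ≤
      0.4 * vnorm ((1 - U * Uᵀ).mulVec (Ustar.mulVec (matCol Btil k)))) :
    ∀ k : Fin q,
      vnorm (U.mulVec (bhat k) - Ustar.mulVec (matCol Btil k)) ≤
        1.4 * vnorm ((1 - U * Uᵀ).mulVec (Ustar.mulVec (matCol Btil k))) ∧
      vnorm (Uᵀ.mulVec (Ustar.mulVec (matCol Btil k)) - bhat k) ≤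
        0.4 * δ * vnorm (matCol Btil k) ∧
      vnorm (U.mulVec (bhat k) - Ustar.mulVec (matCol Btil k)) ≤
        1.4 * δ * vnorm (Ustar.mulVec (matCol Btil k)) ∧
      vnorm (Ustarᵀ.mulVec (U.mulVec (bhat k)) - matCol Btil k) ≤
        2.5 * δ * vnorm (matCol Btil k) ∧
      vnorm (bhat k) ≤ 1.04 * vnorm (matCol Btil k) ∧
      (∀ μ : ℝ, 1 ≤ μ →
        (∀ j, vnorm (matCol Btil j) ≤ μ * spec Btil * Real.sqrt ((r : ℝ) / q)) →
        vnorm (bhat k) ≤ 1.1 * μ * spec Btil * Real.sqrt ((r : ℝ) / q)) :=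
  lemma33_part2_columns_general n r q U Ustar Btil bhat δ hU hUs hδ1 hδ2 hb
end

section
/- Lemma 3.6, part 1 (expectation of the truncated initialization matrix). Let x*_1,…,x*_q ∈ ℝⁿ, let X* be the n×q matrix with these columns, and let α ≥ 0 be a fixed (deterministic) threshold. Let a_ki (k ∈ [q], i ∈ [m]) be i.i.d. standard Gaussian random vectors in ℝⁿ, y_ki := ⟨a_ki, x*_k⟩, and X̂₀ := (1/m)·Σ_{k,i} a_ki·y_ki·1{y_ki² ≤ α}·e_kᵀ (an n×q random matrix, e_k the k-th standard basis vector of ℝ^q). Then E[X̂₀] = X*·D(α), where D(α) is the q×q diagonal matrix with k-th diagonal entry β_k(α) := E[ζ²·1{‖x*_k‖²·ζ² ≤ α}] for ζ a standard Gaussian scalar random variable. -/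
open MeasureTheory ProbabilityTheory Matrix
open scoped ENNReal

open scoped RealInnerProductSpace

/-!
For a standard Gaussian vector `a` and fixed `x`, write the `j`-th coordinate of `a` as
`⟪eⱼ, a⟫` and split `eⱼ = (xⱼ / ‖x‖²) x + w` with `w ⊥ x`. The reflection in the hyperplane
`w⊥` preserves the standard Gaussian, fixes `⟪x, a⟫` and negates `⟪w, a⟫`, so the `w`-part of
`E[⟪eⱼ, a⟫ g(⟪x, a⟫)]` vanishes. What remains, `E[⟪x, a⟫ g(⟪x, a⟫)]`, is a one-dimensional
integral because `⟪x, a⟫ ∼ N(0, ‖x‖²)`; for `g(t) = t 1{t² ≤ α}` it equals `‖x‖² β(α)`.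
Each of the `m` summands of an entry of `X̂₀` thus has expectation `xⱼ β(α)`.
-/

lemma abs_mul_ite_sq_le_sqrt (α t : ℝ) : |t * if t ^ 2 ≤ α then 1 else 0| ≤ √α := by
  split_ifs with h
  · rw [mul_one, ← Real.sqrt_sq_eq_abs]
    exact Real.sqrt_le_sqrt h
  · simp

lemma measurable_mul_ite_sq_le (α : ℝ) :
    Measurable fun t : ℝ => t * if t ^ 2 ≤ α then 1 else 0 :=
  measurable_id.mul (Measurable.ite (measurableSet_le (by fun_prop) measurable_const)
    measurable_const measurable_const)

section StdGaussian

variable {E : Type*} [NormedAddCommGroup E] [InnerProductSpace ℝ E] [FiniteDimensional ℝ E]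
  [MeasurableSpace E] [BorelSpace E]

lemma LinearIsometryEquiv.measurePreserving_stdGaussian (f : E ≃ₗᵢ[ℝ] E) :
    MeasurePreserving f (stdGaussian E) (stdGaussian E) :=
  ⟨f.continuous.measurable, stdGaussian_map f⟩

lemma integral_inner_mul_comp_inner_eq_zero {w x : E} (hwx : ⟪w, x⟫ = 0) (g : ℝ → ℝ) :
    ∫ a, ⟪w, a⟫ * g ⟪x, a⟫ ∂stdGaussian E = 0 := by
  set R := (ℝ ∙ w)ᗮ.reflection
  have hR (v a : E) : ⟪v, R a⟫ = ⟪R v, a⟫ := by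
    rw [← R.inner_map_map, Submodule.reflection_reflection]
  have hRw : R w = -w := Submodule.reflection_orthogonalComplement_singleton_eq_neg w
  have hRx : R x = x := Submodule.reflection_mem_subspace_eq_self
    (Submodule.mem_orthogonal_singleton_iff_inner_right.mpr hwx)
  have h := R.measurePreserving_stdGaussian.integral_comp R.toHomeomorph.measurableEmbedding
    (fun a => ⟪w, a⟫ * g ⟪x, a⟫)
  simp only [hR, hRw, hRx, inner_neg_left, neg_mul, integral_neg] at h
  linarith

lemma integrable_inner_mul_comp_inner (v x : E) {g : ℝ → ℝ} (hg : Measurable g) {C : ℝ}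
    (hC : ∀ t, |g t| ≤ C) :
    Integrable (fun a => ⟪v, a⟫ * g ⟪x, a⟫) (stdGaussian E) :=
  (IsGaussian.integrable_dual _ (innerSL ℝ v)).mul_bdd
    (hg.comp (innerSL ℝ x).continuous.measurable).aestronglyMeasurable (ae_of_all _ fun _ => hC _)

-- At `x = 0` the junk value `⟪v, x⟫ / 0 = 0` keeps this true: the left side is `g 0 • E⟪v, a⟫ = 0`.
lemma integral_inner_mul_comp_inner (v x : E) {g : ℝ → ℝ} (hg : Measurable g) {C : ℝ}
    (hC : ∀ t, |g t| ≤ C) :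
    ∫ a, ⟪v, a⟫ * g ⟪x, a⟫ ∂stdGaussian E =
      ⟪v, x⟫ / ‖x‖ ^ 2 * ∫ a, ⟪x, a⟫ * g ⟪x, a⟫ ∂stdGaussian E := by
  set c := ⟪v, x⟫ / ‖x‖ ^ 2
  have hperp : ⟪v - c • x, x⟫ = 0 := by
    rcases eq_or_ne x 0 with rfl | hx
    · simp
    · rw [inner_sub_left, real_inner_smul_left, real_inner_self_eq_norm_sq,
        div_mul_cancel₀ _ (pow_ne_zero 2 (norm_ne_zero_iff.mpr hx)), sub_self]
  have hsplit : (fun a => ⟪v, a⟫ * g ⟪x, a⟫) =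
      fun a => c * (⟪x, a⟫ * g ⟪x, a⟫) + ⟪v - c • x, a⟫ * g ⟪x, a⟫ := by
    ext a
    rw [inner_sub_left, real_inner_smul_left]
    ring
  rw [hsplit, integral_add ((integrable_inner_mul_comp_inner x x hg hC).const_mul c)
    (integrable_inner_mul_comp_inner _ x hg hC), integral_const_mul,
    integral_inner_mul_comp_inner_eq_zero hperp, add_zero]

lemma map_inner_stdGaussian (x : E) :
    (stdGaussian E).map (fun a => ⟪x, a⟫) = (gaussianReal 0 1).map (‖x‖ * ·) := by
  have h : (stdGaussian E).map (fun a => ⟪x, a⟫) = _ :=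
    IsGaussian.map_eq_gaussianReal (innerSL ℝ x)
  rw [h, integral_strongDual_stdGaussian, variance_dual_stdGaussian, innerSL_apply_norm,
    gaussianReal_map_const_mul, mul_zero, mul_one, Real.toNNReal_of_nonneg (sq_nonneg _)]

lemma integral_comp_inner_stdGaussian (x : E) {f : ℝ → ℝ} (hf : Measurable f) :
    ∫ a, f ⟪x, a⟫ ∂stdGaussian E = ∫ z, f (‖x‖ * z) ∂gaussianReal 0 1 := by
  rw [← integral_map (φ := fun a => ⟪x, a⟫) (by fun_prop) hf.aestronglyMeasurable,
    map_inner_stdGaussian, integral_map (by fun_prop) hf.aestronglyMeasurable]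

lemma integrable_inner_mul_truncated_inner (v x : E) (α : ℝ) :
    Integrable (fun a => ⟪v, a⟫ * (⟪x, a⟫ * if ⟪x, a⟫ ^ 2 ≤ α then 1 else 0)) (stdGaussian E) :=
  integrable_inner_mul_comp_inner v x (measurable_mul_ite_sq_le α) (abs_mul_ite_sq_le_sqrt α)

lemma integral_inner_mul_truncated_inner (v x : E) (α : ℝ) :
    ∫ a, ⟪v, a⟫ * (⟪x, a⟫ * if ⟪x, a⟫ ^ 2 ≤ α then 1 else 0) ∂stdGaussian E =
      ⟪v, x⟫ * betaK ‖x‖ α := by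
  have hbeta : ∫ z, ‖x‖ * z * (‖x‖ * z * if (‖x‖ * z) ^ 2 ≤ α then 1 else 0) ∂gaussianReal 0 1 =
      ‖x‖ ^ 2 * betaK ‖x‖ α := by
    rw [betaK, ← integral_const_mul]
    congr with z
    rw [mul_pow]
    ring
  rw [integral_inner_mul_comp_inner v x (measurable_mul_ite_sq_le α) (abs_mul_ite_sq_le_sqrt α),
    integral_comp_inner_stdGaussian x (f := fun t => t * (t * if t ^ 2 ≤ α then 1 else 0))
      (measurable_id.mul (measurable_mul_ite_sq_le α)), hbeta]
  rcases eq_or_ne x 0 with rfl | hx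
  · simp
  · field_simp

end StdGaussian

lemma norm_toLp_eq_vnorm {n : ℕ} (x : Fin n → ℝ) : ‖WithLp.toLp 2 x‖ = vnorm x := by
  simp [EuclideanSpace.norm_eq, vnorm]

lemma measurePreserving_toLp_gaussianVec (n : ℕ) :
    MeasurePreserving (WithLp.toLp 2) (gaussianVec n) (stdGaussian (EuclideanSpace ℝ (Fin n))) :=
  ⟨WithLp.measurable_toLp 2 _, map_pi_eq_stdGaussian⟩

lemma integral_gaussianVec_coord_mul_truncated_dotProduct {n : ℕ} (x : Fin n → ℝ) (j : Fin n)
    (α : ℝ) :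
    ∫ a, a j * (a ⬝ᵥ x) * (if (a ⬝ᵥ x) ^ 2 ≤ α then 1 else 0) ∂gaussianVec n =
      x j * betaK (vnorm x) α := by
  have h := (measurePreserving_toLp_gaussianVec n).integral_comp
    (MeasurableEquiv.toLp 2 _).measurableEmbedding
    (fun a => ⟪WithLp.toLp 2 (Pi.single j 1), a⟫ *
      (⟪WithLp.toLp 2 x, a⟫ * if ⟪WithLp.toLp 2 x, a⟫ ^ 2 ≤ α then 1 else 0))
  rw [integral_inner_mul_truncated_inner, norm_toLp_eq_vnorm] at h
  simp only [EuclideanSpace.inner_toLp_toLp, star_trivial, dotProduct_single, mul_one] at h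
  simpa only [mul_assoc] using h

lemma integrable_gaussianVec_coord_mul_truncated_dotProduct {n : ℕ} (x : Fin n → ℝ) (j : Fin n)
    (α : ℝ) :
    Integrable (fun a => a j * (a ⬝ᵥ x) * (if (a ⬝ᵥ x) ^ 2 ≤ α then 1 else 0)) (gaussianVec n) := by
  have h := ((measurePreserving_toLp_gaussianVec n).integrable_comp_emb
    (MeasurableEquiv.toLp 2 _).measurableEmbedding).mpr
    (integrable_inner_mul_truncated_inner (WithLp.toLp 2 (Pi.single j 1)) (WithLp.toLp 2 x) α)
  simpa only [Function.comp_def, EuclideanSpace.inner_toLp_toLp, star_trivial, dotProduct_single,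
    mul_one, mul_assoc] using h

lemma measurePreserving_eval_eval_gaussianMatrices (q m n : ℕ) (k : Fin q) (i : Fin m) :
    MeasurePreserving (fun ω => ω k i) (gaussianMatrices q m n) (gaussianVec n) :=
  (measurePreserving_eval (fun _ => gaussianVec n) i).comp
    (measurePreserving_eval (fun _ => Measure.pi fun _ => gaussianVec n) k)

theorem lemma36_part1_general (n q m : ℕ) (hm : 1 ≤ m) (xstar : Fin q → Fin n → ℝ)
    (α : ℝ) :
    (Matrix.of fun (j : Fin n) (k : Fin q) =>
        ∫ ω, initMat xstar α ω j k ∂(gaussianMatrices q m n)) =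
      (Matrix.of fun (i : Fin n) (k : Fin q) => xstar k i) *
        Matrix.diagonal (fun k => betaK (vnorm (xstar k)) α) := by
  ext j k
  set F := fun a : Fin n → ℝ => a j * (a ⬝ᵥ xstar k) * (if (a ⬝ᵥ xstar k) ^ 2 ≤ α then 1 else 0)
  have hF : Integrable F (gaussianVec n) :=
    integrable_gaussianVec_coord_mul_truncated_dotProduct (xstar k) j α
  have hterm (i : Fin m) :
      ∫ ω, F (ω k i) ∂gaussianMatrices q m n = xstar k j * betaK (vnorm (xstar k)) α := by
    have hmp := measurePreserving_eval_eval_gaussianMatrices q m n k i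
    rw [← integral_gaussianVec_coord_mul_truncated_dotProduct, ← hmp.map_eq,
      integral_map hmp.measurable.aemeasurable (hmp.map_eq ▸ hF.aestronglyMeasurable)]
  have hint (i : Fin m) : Integrable (fun ω => F (ω k i)) (gaussianMatrices q m n) :=
    (measurePreserving_eval_eval_gaussianMatrices q m n k i).integrable_comp_of_integrable hF
  simp only [initMat, Matrix.of_apply, Matrix.mul_diagonal]
  rw [integral_const_mul, integral_finsetSum _ fun i _ => hint i]
  simp only [hterm, Finset.sum_const, Finset.card_univ, Fintype.card_fin, nsmul_eq_mul]
  have hm0 : (m : ℝ) ≠ 0 := Nat.cast_ne_zero.mpr (by omega)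
  field_simp

/-- **Lemma 3.6, part 1** (expectation of the truncated initialization matrix,
fixed threshold `α`). -/
theorem lemma36_part1 (n q m : ℕ) (hm : 1 ≤ m) (xstar : Fin q → Fin n → ℝ)
    (α : ℝ) (hα : 0 ≤ α) :
    (Matrix.of fun (j : Fin n) (k : Fin q) =>
        ∫ ω, initMat xstar α ω j k ∂(gaussianMatrices q m n)) =
      (Matrix.of fun (i : Fin n) (k : Fin q) => xstar k i) *
        Matrix.diagonal (fun k => betaK (vnorm (xstar k)) α) :=
  lemma36_part1_general n q m hm xstar α
end

section
/- Proposition 4.3 (epsilon-net extension for the spectral norm of a random matrix). Let n, r ≥ 1, b₀ ≥ 0 and p₀ ∈ [0,1]. Let M be a random n×r real matrix (a measurable map from a probability space into n×r matrices) such that for every fixed unit vectors w ∈ ℝⁿ and z ∈ ℝ^r, the probability that |wᵀMz| > b₀ is at most p₀. Then the probability that sup over unit vectors w ∈ ℝⁿ, z ∈ ℝ^r of |wᵀMz| exceeds 1.4·b₀ is at most 17^{n+r}·p₀; i.e., with probability at least 1 − 17^{n+r}·p₀, the spectral norm satisfies ‖M‖ ≤ 1.4·b₀. -/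
open MeasureTheory ProbabilityTheory Matrix
open scoped ENNReal

/-!
Take `1/8`-nets `N_w`, `N_z` of the two unit spheres inside the spheres. Balls of radius `1/16`
around the points of a `1/8`-separated subset of the unit sphere are disjoint and lie in the ball
of radius `17/16`, so comparing volumes gives nets with at most `17ⁿ` and `17ʳ` points.
For a fixed matrix `A`, approximating unit vectors `w, z` by net points `w', z'` gives
`wᵀAz = w'ᵀAz' + (w - w')ᵀAz + w'ᵀA(z - z')`, hence `‖A‖ ≤ max_{N_w × N_z} |w'ᵀAz'| + ‖A‖/4`.
So if `|w'ᵀAz'| ≤ b₀` on the net, then `‖A‖ ≤ 4/3 · b₀ ≤ 1.4 · b₀`, and the event in question is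
contained in the union of the `17ⁿ⁺ʳ` events `{b₀ < |w'ᵀMz'|}`.
-/

open Metric Module
open scoped NNReal

lemma Metric.IsCover.exists_dist_le {X : Type*} [PseudoMetricSpace X] {ε : ℝ≥0} {s N : Set X}
    (hN : IsCover ε s N) {x : X} (hx : x ∈ s) : ∃ y ∈ N, dist x y ≤ ε := by
  simpa using isCover_iff_subset_iUnion_closedBall.1 hN hx

section SphereNet

variable {E : Type*} [NormedAddCommGroup E] [NormedSpace ℝ E] [FiniteDimensional ℝ E]

lemma Finset.card_le_of_isSeparated_of_subset_closedBall {ε : ℝ≥0} (hε : 0 < ε) {S : Finset E}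
    (hS : (S : Set E) ⊆ closedBall 0 1) (hsep : IsSeparated ε (S : Set E)) :
    (S.card : ℝ) ≤ (1 + 2 / ε) ^ finrank ℝ E := by
  borelize E
  set μ : Measure E := Measure.addHaar
  have hε' : (0 : ℝ) < ε := hε
  have hball_pos : μ (ball 0 1) ≠ 0 := (measure_ball_pos μ 0 one_pos).ne'
  have hball_fin : μ (ball 0 1) ≠ ⊤ := measure_ball_lt_top.ne
  have hdisj : (S : Set E).PairwiseDisjoint (fun x => ball x (ε / 2)) := by
    intro x hx y hy hxy
    have hxy_sep : (ε : ℝ≥0∞) < edist x y := hsep hx hy hxy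
    rw [edist_nndist, ENNReal.coe_lt_coe, ← NNReal.coe_lt_coe, coe_nndist] at hxy_sep
    exact ball_disjoint_ball (by linarith)
  have hsub : (⋃ x ∈ S, ball x (ε / 2)) ⊆ ball (0 : E) (1 + ε / 2) := by
    simp only [Set.iUnion_subset_iff]
    intro x hx z hz
    have hx1 : dist x 0 ≤ 1 := hS hx
    rw [mem_ball] at hz ⊢
    linarith [dist_triangle z x 0]
  have hvol : (S.card : ℝ≥0∞) * ENNReal.ofReal ((ε / 2) ^ finrank ℝ E) * μ (ball 0 1) ≤
      ENNReal.ofReal ((1 + ε / 2) ^ finrank ℝ E) * μ (ball 0 1) :=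
    calc (S.card : ℝ≥0∞) * ENNReal.ofReal ((ε / 2) ^ finrank ℝ E) * μ (ball 0 1)
        = ∑ x ∈ S, μ (ball x (ε / 2)) := by
          simp [Measure.addHaar_ball_of_pos μ _ (half_pos hε'), mul_assoc]
      _ = μ (⋃ x ∈ S, ball x (ε / 2)) :=
          (measure_biUnion_finset hdisj fun _ _ => measurableSet_ball).symm
      _ ≤ μ (ball 0 (1 + ε / 2)) := measure_mono hsub
      _ = ENNReal.ofReal ((1 + ε / 2) ^ finrank ℝ E) * μ (ball 0 1) :=
          Measure.addHaar_ball_of_pos μ _ (by positivity)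
  rw [ENNReal.mul_le_mul_iff_left hball_pos hball_fin, ← ENNReal.ofReal_natCast,
    ← ENNReal.ofReal_mul (by positivity), ENNReal.ofReal_le_ofReal_iff (by positivity),
    ← le_div_iff₀ (by positivity), ← div_pow] at hvol
  rwa [show (1 + ε / 2) / (ε / 2) = 1 + 2 / (ε : ℝ) by field_simp; ring] at hvol

lemma Set.encard_le_of_isSeparated_of_subset_closedBall {ε : ℝ≥0} (hε : 0 < ε) {C : Set E}
    (hC : C ⊆ closedBall 0 1) (hsep : IsSeparated ε C) :
    C.encard ≤ ⌊(1 + 2 / ε) ^ finrank ℝ E⌋₊ := by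
  by_contra! hlt
  obtain ⟨t, htC, ht⟩ := Set.exists_subset_encard_eq (Order.add_one_le_of_lt hlt)
  have htfin : t.Finite := Set.finite_of_encard_eq_coe ht
  have hcard := Finset.card_le_of_isSeparated_of_subset_closedBall hε
    (by simpa using htC.trans hC) (by simpa using hsep.subset htC) (S := htfin.toFinset)
  rw [← Set.ncard_eq_toFinset_card t htfin, Set.ncard_def, ht] at hcard
  exact (Nat.lt_floor_add_one _).not_ge (by exact_mod_cast hcard)

lemma exists_finset_isCover_sphere {ε : ℝ≥0} (hε : 0 < ε) :
    ∃ N : Finset E, (N : Set E) ⊆ sphere 0 1 ∧ (N.card : ℝ) ≤ (1 + 2 / ε) ^ finrank ℝ E ∧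
      IsCover ε (sphere 0 1) (N : Set E) := by
  set C := maximalSeparatedSet ε (sphere (0 : E) 1)
  have hC : C ⊆ closedBall 0 1 := maximalSeparatedSet_subset.trans sphere_subset_closedBall
  have hpack : packingNumber ε (sphere (0 : E) 1) ≠ ⊤ :=
    ne_top_of_le_ne_top (ENat.natCast_ne_top ⌊(1 + 2 / ε) ^ finrank ℝ E⌋₊) <|
      iSup₂_le fun C hC => iSup_le fun hsep =>
        Set.encard_le_of_isSeparated_of_subset_closedBall hε
          (hC.trans sphere_subset_closedBall) hsep
  have hfin : C.Finite := Set.finite_of_encard_le_coe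
    (Set.encard_le_of_isSeparated_of_subset_closedBall hε hC isSeparated_maximalSeparatedSet)
  refine ⟨hfin.toFinset, by simpa using maximalSeparatedSet_subset,
    Finset.card_le_of_isSeparated_of_subset_closedBall hε (by simpa using hC)
      (by simpa using isSeparated_maximalSeparatedSet), by
      simpa using isCover_maximalSeparatedSet hpack⟩

end SphereNet

section NetBound

variable {E F G : Type*} [NormedAddCommGroup E] [NormedSpace ℝ E] [NormedAddCommGroup F]
  [NormedSpace ℝ F] [NormedAddCommGroup G] [NormedSpace ℝ G]

lemma ContinuousLinearMap.one_sub_two_mul_opNorm_le_of_isCover (B : E →L[ℝ] F →L[ℝ] G)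
    {ε : ℝ≥0} {m : ℝ} (hm : 0 ≤ m) {Nw : Set E} {Nz : Set F} (hNw_sub : Nw ⊆ sphere 0 1)
    (hNw : IsCover ε (sphere 0 1) Nw) (hNz : IsCover ε (sphere 0 1) Nz)
    (hB : ∀ w ∈ Nw, ∀ z ∈ Nz, ‖B w z‖ ≤ m) :
    (1 - 2 * ε) * ‖B‖ ≤ m := by
  have hunit : ∀ w z, ‖w‖ = 1 → ‖z‖ = 1 → ‖B w z‖ ≤ m + 2 * ε * ‖B‖ := by
    intro w z hw hz
    obtain ⟨w', hw', hww'⟩ := hNw.exists_dist_le (mem_sphere_zero_iff_norm.2 hw)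
    obtain ⟨z', hz', hzz'⟩ := hNz.exists_dist_le (mem_sphere_zero_iff_norm.2 hz)
    have hw'_norm : ‖w'‖ = 1 := mem_sphere_zero_iff_norm.1 (hNw_sub hw')
    have hsplit : B w z = B w' z' + B (w - w') z + B w' (z - z') := by
      simp only [map_sub, _root_.sub_apply]
      abel
    have hw_err : ‖B (w - w') z‖ ≤ ‖B‖ * ε := by
      calc ‖B (w - w') z‖ ≤ ‖B‖ * ‖w - w'‖ * ‖z‖ := B.le_opNorm₂ _ _
        _ ≤ ‖B‖ * ε := by rw [hz, mul_one, ← dist_eq_norm]; gcongr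
    have hz_err : ‖B w' (z - z')‖ ≤ ‖B‖ * ε := by
      calc ‖B w' (z - z')‖ ≤ ‖B‖ * ‖w'‖ * ‖z - z'‖ := B.le_opNorm₂ _ _
        _ ≤ ‖B‖ * ε := by rw [hw'_norm, mul_one, ← dist_eq_norm]; gcongr
    calc ‖B w z‖ ≤ ‖B w' z'‖ + ‖B (w - w') z‖ + ‖B w' (z - z')‖ := hsplit ▸ norm_add₃_le
      _ ≤ m + ‖B‖ * ε + ‖B‖ * ε := by gcongr; exact hB w' hw' z' hz'
      _ = m + 2 * ε * ‖B‖ := by ring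
  have hC : 0 ≤ m + 2 * ε * ‖B‖ := by positivity
  have := B.opNorm_le_of_unit_norm hC fun w hw =>
    (B w).opNorm_le_of_unit_norm hC fun z hz => hunit w z hw hz
  linarith

end NetBound

section Matrix

variable {ι κ : Type*} [Fintype ι] [Fintype κ]

lemma vnorm_ofLp (x : EuclideanSpace ℝ ι) : vnorm (WithLp.ofLp x) = ‖x‖ := by
  simp [vnorm, EuclideanSpace.norm_eq]

open scoped Classical in
noncomputable def Matrix.euclideanBilin (A : Matrix ι κ ℝ) :
    EuclideanSpace ℝ ι →L[ℝ] EuclideanSpace ℝ κ →L[ℝ] ℝ :=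
  (innerSL ℝ).bilinearComp (.id ℝ _) (LinearMap.toContinuousLinearMap (Matrix.toLpLin 2 2 A))

lemma Matrix.euclideanBilin_apply (A : Matrix ι κ ℝ) (w : EuclideanSpace ℝ ι)
    (z : EuclideanSpace ℝ κ) :
    A.euclideanBilin w z = WithLp.ofLp w ⬝ᵥ A *ᵥ WithLp.ofLp z := by
  simp [euclideanBilin, EuclideanSpace.inner_eq_star_dotProduct, toLpLin_apply, dotProduct_comm]

lemma Matrix.abs_dotProduct_mulVec_le_of_isCover (A : Matrix ι κ ℝ) {ε : ℝ≥0} (hε : ε < 1 / 2)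
    {b : ℝ} (hb : 0 ≤ b) {Nw : Set (EuclideanSpace ℝ ι)} {Nz : Set (EuclideanSpace ℝ κ)}
    (hNw_sub : Nw ⊆ sphere 0 1) (hNw : IsCover ε (sphere 0 1) Nw)
    (hNz : IsCover ε (sphere 0 1) Nz)
    (hA : ∀ w ∈ Nw, ∀ z ∈ Nz, |WithLp.ofLp w ⬝ᵥ A *ᵥ WithLp.ofLp z| ≤ b)
    {w : ι → ℝ} {z : κ → ℝ} (hw : vnorm w = 1) (hz : vnorm z = 1) :
    |w ⬝ᵥ A *ᵥ z| ≤ b / (1 - 2 * ε) := by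
  have hε' : (ε : ℝ) < 1 / 2 := by exact_mod_cast hε
  have hB := A.euclideanBilin.one_sub_two_mul_opNorm_le_of_isCover hb hNw_sub hNw hNz
    fun w hw z hz => by simpa [euclideanBilin_apply] using hA w hw z hz
  have hwz : |w ⬝ᵥ A *ᵥ z| ≤ ‖A.euclideanBilin‖ := by
    simpa [euclideanBilin_apply, ← vnorm_ofLp, hw, hz] using
      A.euclideanBilin.le_opNorm₂ (WithLp.toLp 2 w) (WithLp.toLp 2 z)
  rw [le_div_iff₀ (by linarith)]
  exact (mul_le_mul_of_nonneg_right hwz (by linarith)).trans (by linarith)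

lemma Matrix.exists_net_abs_dotProduct_mulVec_le :
    ∃ N : Finset (EuclideanSpace ℝ ι × EuclideanSpace ℝ κ),
      N.card ≤ 17 ^ (Fintype.card ι + Fintype.card κ) ∧ (∀ p ∈ N, ‖p.1‖ = 1 ∧ ‖p.2‖ = 1) ∧
      ∀ (A : Matrix ι κ ℝ) (b : ℝ), 0 ≤ b →
        (∀ p ∈ N, |WithLp.ofLp p.1 ⬝ᵥ A *ᵥ WithLp.ofLp p.2| ≤ b) →
        ∀ w z, vnorm w = 1 → vnorm z = 1 → |w ⬝ᵥ A *ᵥ z| ≤ 1.4 * b := by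
  obtain ⟨Nw, hNw_sub, hNw_card, hNw⟩ :=
    exists_finset_isCover_sphere (E := EuclideanSpace ℝ ι) (ε := 1 / 8) (by norm_num)
  obtain ⟨Nz, hNz_sub, hNz_card, hNz⟩ :=
    exists_finset_isCover_sphere (E := EuclideanSpace ℝ κ) (ε := 1 / 8) (by norm_num)
  norm_num at hNw_card hNz_card
  refine ⟨Nw ×ˢ Nz, ?_, fun p hp => ?_, fun A b hb hA w z hw hz => ?_⟩
  · rw [Finset.card_product, pow_add]
    gcongr
    exacts [by exact_mod_cast hNw_card, by exact_mod_cast hNz_card]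
  · rw [Finset.mem_product] at hp
    exact ⟨mem_sphere_zero_iff_norm.1 (hNw_sub hp.1), mem_sphere_zero_iff_norm.1 (hNz_sub hp.2)⟩
  · have := A.abs_dotProduct_mulVec_le_of_isCover (by norm_num) hb hNw_sub hNw hNz
      (fun w hw z hz => hA (w, z) (Finset.mem_product.2 ⟨hw, hz⟩)) hw hz
    norm_num at this
    linarith

end Matrix

lemma MeasureTheory.measure_biUnion_finset_le_card_mul {α ι : Type*} [MeasurableSpace α]
    (μ : Measure α) (I : Finset ι) (s : ι → Set α) {c : ℝ≥0∞} (hs : ∀ i ∈ I, μ (s i) ≤ c) :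
    μ (⋃ i ∈ I, s i) ≤ I.card * c :=
  (measure_biUnion_finset_le I s).trans <| by
    simpa only [nsmul_eq_mul] using Finset.sum_le_card_nsmul I _ c hs

theorem prop43_general (n r : ℕ) (b₀ p₀ : ℝ) (hb : 0 ≤ b₀)
    (Ω : Type) [MeasurableSpace Ω] (P : Measure Ω)
    (M : Ω → Fin n → Fin r → ℝ)
    (h : ∀ (w : Fin n → ℝ) (z : Fin r → ℝ), vnorm w = 1 → vnorm z = 1 →
      P {ω | b₀ < |w ⬝ᵥ (Matrix.of (M ω)).mulVec z|} ≤ ENNReal.ofReal p₀) :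
    P {ω | ∃ (w : Fin n → ℝ) (z : Fin r → ℝ), vnorm w = 1 ∧ vnorm z = 1 ∧
        1.4 * b₀ < |w ⬝ᵥ (Matrix.of (M ω)).mulVec z|} ≤
      (17 : ℝ≥0∞) ^ (n + r) * ENNReal.ofReal p₀ := by
  obtain ⟨N, hN_card, hN_unit, hN⟩ :=
    Matrix.exists_net_abs_dotProduct_mulVec_le (ι := Fin n) (κ := Fin r)
  rw [Fintype.card_fin, Fintype.card_fin] at hN_card
  have hcover : {ω | ∃ (w : Fin n → ℝ) (z : Fin r → ℝ), vnorm w = 1 ∧ vnorm z = 1 ∧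
        1.4 * b₀ < |w ⬝ᵥ (Matrix.of (M ω)).mulVec z|} ⊆
      ⋃ p ∈ N, {ω | b₀ < |WithLp.ofLp p.1 ⬝ᵥ (Matrix.of (M ω)).mulVec (WithLp.ofLp p.2)|} := by
    rintro ω ⟨w, z, hw, hz, hlarge⟩
    by_contra! hsmall
    simp only [Set.mem_iUnion, Set.mem_ofPred_eq, exists_prop, not_exists, not_and,
      not_lt] at hsmall
    exact hlarge.not_ge (hN _ b₀ hb hsmall w z hw hz)
  calc _ ≤ P (⋃ p ∈ N,
        {ω | b₀ < |WithLp.ofLp p.1 ⬝ᵥ (Matrix.of (M ω)).mulVec (WithLp.ofLp p.2)|}) :=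
        measure_mono hcover
    _ ≤ N.card * ENNReal.ofReal p₀ := measure_biUnion_finset_le_card_mul P N _ fun p hp =>
        h _ _ ((vnorm_ofLp _).trans (hN_unit p hp).1) ((vnorm_ofLp _).trans (hN_unit p hp).2)
    _ ≤ (17 : ℝ≥0∞) ^ (n + r) * ENNReal.ofReal p₀ := by
        gcongr
        exact_mod_cast hN_card

/-- **Proposition 4.3** (epsilon-net extension for the spectral norm of a random matrix). -/
theorem prop43 (n r : ℕ) (hn : 1 ≤ n) (hr : 1 ≤ r) (b₀ p₀ : ℝ) (hb : 0 ≤ b₀)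
    (hp0 : 0 ≤ p₀) (hp1 : p₀ ≤ 1)
    (Ω : Type) [MeasurableSpace Ω] (P : Measure Ω) [IsProbabilityMeasure P]
    (M : Ω → Fin n → Fin r → ℝ) (hM : Measurable M)
    (h : ∀ (w : Fin n → ℝ) (z : Fin r → ℝ), vnorm w = 1 → vnorm z = 1 →
      P {ω | b₀ < |w ⬝ᵥ (Matrix.of (M ω)).mulVec z|} ≤ ENNReal.ofReal p₀) :
    P {ω | ∃ (w : Fin n → ℝ) (z : Fin r → ℝ), vnorm w = 1 ∧ vnorm z = 1 ∧
        1.4 * b₀ < |w ⬝ᵥ (Matrix.of (M ω)).mulVec z|} ≤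
      (17 : ℝ≥0∞) ^ (n + r) * ENNReal.ofReal p₀ :=
  prop43_general n r b₀ p₀ hb Ω P M h
end

section
/- Proposition 4.5 (epsilon-net extension for two-sided bounds on a random quadratic form). Let n, r, q, m ≥ 1, let 0 < b₁ ≤ b₂, and let p₀ ∈ [0,1]. Let M_ki (k ∈ [q], i ∈ [m]) be random n×r real matrices on a common probability space such that for every fixed n×r real matrix W with ‖W‖_F = 1, the probability that Σ_{k,i}⟨M_ki, W⟩² lies outside the interval [b₁, b₂] is at most p₀. Then with probability at least 1 − (33·b₂/b₁)^{nr}·p₀, the following holds simultaneously for all n×r real matrices W with ‖W‖_F = 1: 0.8·b₁ ≤ Σ_{k,i}⟨M_ki, W⟩² ≤ 1.4·b₂. -/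
open MeasureTheory ProbabilityTheory Matrix
open scoped ENNReal

/-! A volumetric argument gives an `ε`-net `s` of the unit sphere of `ℝ^{n×r}` (Frobenius norm)
with at most `(1 + 2/ε)^(nr)` points, which for `ε = 0.09 √(b₁/b₂)` is at most `(33 b₂/b₁)^(nr)`.
By the union bound, with probability at least `1 - #s p₀` the quadratic form lies in `[b₁, b₂]`
at every point of `s`. On that event write the form as `‖T W‖²` for a linear map `T`: comparing
each unit `W` with a nearby net point gives `(1 - ε) ‖T‖ ≤ √b₂` and `‖T W‖ ≥ √b₁ - ε ‖T‖`,
hence `0.8 b₁ ≤ ‖T W‖² ≤ 1.4 b₂`. -/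

open Metric Module Finset
open scoped NNReal

section Packing

variable {E : Type*} [NormedAddCommGroup E] [NormedSpace ℝ E] [FiniteDimensional ℝ E]

lemma card_le_of_isSeparated_of_subset_sphere {ε : ℝ≥0} (hε : 0 < ε) {C : Finset E}
    (hC : (C : Set E) ⊆ sphere 0 1) (hsep : IsSeparated ε (C : Set E)) :
    (#C : ℝ) ≤ (1 + 2 / ε) ^ finrank ℝ E := by
  borelize E
  set μ : Measure E := Measure.addHaar
  have hε2 : (0 : ℝ) < ε / 2 := by positivity
  have hdisj : (C : Set E).PairwiseDisjoint fun y => ball y (ε / 2) := by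
    intro x hx y hy hxy
    refine ball_disjoint_ball ?_
    have h : (ε : ℝ≥0∞) < edist x y := hsep hx hy hxy
    rw [edist_dist, ← ENNReal.ofReal_coe_nnreal] at h
    have h' : (ε : ℝ) < dist x y := (ENNReal.ofReal_lt_ofReal_iff_of_nonneg ε.2).1 h
    linarith
  have hsub : (⋃ y ∈ C, ball y (ε / 2)) ⊆ ball (0 : E) (1 + ε / 2) := by
    refine Set.iUnion₂_subset fun y hy z hz => ?_
    rw [mem_ball] at hz
    rw [mem_ball, dist_zero_right]
    have hy1 : ‖y‖ = 1 := by simpa using hC hy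
    calc ‖z‖ ≤ ‖y‖ + dist z y := by simpa [dist_eq_norm] using norm_le_norm_add_norm_sub' z y
      _ < 1 + ε / 2 := by rw [hy1]; gcongr
  have hvol : (#C : ℝ≥0∞) * ENNReal.ofReal ((ε / 2) ^ finrank ℝ E) * μ (ball 0 1) ≤
      ENNReal.ofReal ((1 + ε / 2) ^ finrank ℝ E) * μ (ball 0 1) := by
    calc (#C : ℝ≥0∞) * ENNReal.ofReal ((ε / 2) ^ finrank ℝ E) * μ (ball 0 1)
        = ∑ y ∈ C, μ (ball y (ε / 2)) := by
          simp [Measure.addHaar_ball_of_pos μ _ hε2, mul_assoc]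
      _ = μ (⋃ y ∈ C, ball y (ε / 2)) :=
          (measure_biUnion_finset hdisj fun _ _ => measurableSet_ball).symm
      _ ≤ μ (ball 0 (1 + ε / 2)) := measure_mono hsub
      _ = ENNReal.ofReal ((1 + ε / 2) ^ finrank ℝ E) * μ (ball 0 1) :=
          Measure.addHaar_ball_of_pos μ _ (by positivity)
  rw [ENNReal.mul_le_mul_iff_left (measure_ball_pos μ 0 one_pos).ne' measure_ball_lt_top.ne,
    ← ENNReal.ofReal_natCast, ← ENNReal.ofReal_mul (by positivity),
    ENNReal.ofReal_le_ofReal_iff (by positivity)] at hvol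
  have hpow : (1 + 2 / ε : ℝ) ^ finrank ℝ E * (ε / 2) ^ finrank ℝ E =
      (1 + ε / 2) ^ finrank ℝ E := by
    rw [← mul_pow]; congr 1; field_simp; ring
  exact le_of_mul_le_mul_right (hvol.trans_eq hpow.symm) (by positivity)

lemma packingNumber_sphere_le {ε : ℝ≥0} (hε : 0 < ε) :
    packingNumber ε (sphere (0 : E) 1) ≤ ⌊(1 + 2 / ε : ℝ) ^ finrank ℝ E⌋₊ := by
  refine iSup₂_le fun C hC => iSup_le fun hsep => ?_
  by_contra! hlt
  obtain ⟨t, htC, ht⟩ := Set.exists_subset_encard_eq (Order.add_one_le_of_lt hlt)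
  have htfin : t.Finite := Set.finite_of_encard_eq_coe (k := _ + 1) (by rw [ht]; norm_cast)
  have hcard := card_le_of_isSeparated_of_subset_sphere hε (C := htfin.toFinset)
    (by simpa using htC.trans hC) (by simpa using hsep.subset htC)
  rw [← Set.ncard_eq_toFinset_card t htfin, Set.ncard_def, ht] at hcard
  rw [← Nat.cast_add_one, ENat.toNat_natCast, Nat.cast_add_one] at hcard
  exact hcard.not_gt (Nat.lt_floor_add_one _)

lemma exists_finset_sphere_cover {ε : ℝ} (hε : 0 < ε) :
    ∃ s : Finset E, (s : Set E) ⊆ sphere 0 1 ∧ (#s : ℝ) ≤ (1 + 2 / ε) ^ finrank ℝ E ∧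
      ∀ x ∈ sphere (0 : E) 1, ∃ y ∈ s, ‖x - y‖ ≤ ε := by
  have hε' : 0 < ε.toNNReal := Real.toNNReal_pos.2 hε
  have hpack := packingNumber_sphere_le (E := E) hε'
  rw [Real.coe_toNNReal _ hε.le] at hpack
  have hfin : packingNumber ε.toNNReal (sphere (0 : E) 1) ≠ ⊤ :=
    ne_top_of_le_ne_top (by simp) hpack
  set S := maximalSeparatedSet ε.toNNReal (sphere (0 : E) 1)
  obtain ⟨hSfin, hScard⟩ :=
    Set.encard_le_coe_iff_finite_ncard_le.1 (encard_maximalSeparatedSet hfin ▸ hpack)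
  refine ⟨hSfin.toFinset, by simpa using maximalSeparatedSet_subset, ?_, fun x hx => ?_⟩
  · rw [← Set.ncard_eq_toFinset_card S hSfin]
    exact (Nat.cast_le.2 hScard).trans (Nat.floor_le (by positivity))
  · obtain ⟨y, hy, hxy⟩ := isCover_maximalSeparatedSet hfin hx
    refine ⟨y, hSfin.mem_toFinset.2 hy, ?_⟩
    rw [← dist_eq_norm]
    simpa [edist_dist, hε.le] using hxy

end Packing

/-- The constant `0.09` is what makes `(1 - 0.09 / 0.91)² ≥ 0.8`, `0.91⁻² ≤ 1.4` and
`1 + 2 / netRadius b₁ b₂ ≤ 33 b₂ / b₁` hold. -/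
noncomputable def netRadius (b₁ b₂ : ℝ) : ℝ := 0.09 * √(b₁ / b₂)

section NetRadius

variable {b₁ b₂ : ℝ}

lemma netRadius_eq (hb₁ : 0 ≤ b₁) : netRadius b₁ b₂ = 0.09 * √b₁ / √b₂ := by
  rw [netRadius, Real.sqrt_div hb₁, mul_div_assoc]

lemma netRadius_pos (hb₁ : 0 < b₁) (hb₁₂ : b₁ ≤ b₂) : 0 < netRadius b₁ b₂ := by
  unfold netRadius; have := hb₁.trans_le hb₁₂; positivity

lemma netRadius_le (hb₁ : 0 < b₁) (hb₁₂ : b₁ ≤ b₂) : netRadius b₁ b₂ ≤ 0.09 := by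
  have : √(b₁ / b₂) ≤ 1 := Real.sqrt_le_one.2 ((div_le_one (hb₁.trans_le hb₁₂)).2 hb₁₂)
  unfold netRadius
  linarith

lemma one_add_two_div_netRadius_le (hb₁ : 0 < b₁) (hb₁₂ : b₁ ≤ b₂) :
    1 + 2 / netRadius b₁ b₂ ≤ 33 * b₂ / b₁ := by
  have hα : 0 < √b₁ := Real.sqrt_pos.2 hb₁
  have hαβ : √b₁ ≤ √b₂ := Real.sqrt_le_sqrt hb₁₂
  have hb : 33 * b₂ / b₁ = 33 * √b₂ ^ 2 / √b₁ ^ 2 := by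
    rw [Real.sq_sqrt hb₁.le, Real.sq_sqrt (hb₁.le.trans hb₁₂)]
  rw [netRadius_eq hb₁.le, hb]
  field_simp
  nlinarith

end NetRadius

section NetExtension

variable {E F : Type*} [NormedAddCommGroup E] [NormedSpace ℝ E] [NormedAddCommGroup F]
  [NormedSpace ℝ F] {T : E →L[ℝ] F} {s : Set E} {ε : ℝ}

lemma one_sub_mul_opNorm_le_of_sphere_cover (hε : 0 ≤ ε)
    (hcover : ∀ x ∈ sphere (0 : E) 1, ∃ y ∈ s, ‖x - y‖ ≤ ε) {β : ℝ} (hβ : 0 ≤ β)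
    (hs : ∀ y ∈ s, ‖T y‖ ≤ β) : (1 - ε) * ‖T‖ ≤ β := by
  have : ‖T‖ ≤ β + ε * ‖T‖ := T.opNorm_le_of_unit_norm (by positivity) fun x hx => by
    obtain ⟨y, hy, hxy⟩ := hcover x (mem_sphere_zero_iff_norm.2 hx)
    calc ‖T x‖ = ‖T y + T (x - y)‖ := by rw [← map_add, add_sub_cancel]
      _ ≤ ‖T y‖ + ‖T‖ * ‖x - y‖ := norm_add_le_of_le le_rfl (T.le_opNorm _)
      _ ≤ β + ε * ‖T‖ := by rw [mul_comm]; gcongr; exact hs y hy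
  linarith

lemma sub_mul_opNorm_le_norm_apply_of_sphere_cover
    (hcover : ∀ x ∈ sphere (0 : E) 1, ∃ y ∈ s, ‖x - y‖ ≤ ε) {α : ℝ}
    (hs : ∀ y ∈ s, α ≤ ‖T y‖) {x : E} (hx : x ∈ sphere (0 : E) 1) :
    α - ε * ‖T‖ ≤ ‖T x‖ := by
  obtain ⟨y, hy, hxy⟩ := hcover x hx
  have : ‖T y‖ ≤ ‖T x‖ + ε * ‖T‖ :=
    calc ‖T y‖ = ‖T x - T (x - y)‖ := by rw [← map_sub, sub_sub_cancel]
      _ ≤ ‖T x‖ + ‖T‖ * ‖x - y‖ := norm_sub_le_of_le le_rfl (T.le_opNorm _)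
      _ ≤ ‖T x‖ + ε * ‖T‖ := by rw [mul_comm]; gcongr
  linarith [hs y hy]

lemma sq_norm_apply_mem_Icc_of_netRadius_cover {b₁ b₂ : ℝ} (hb₁ : 0 < b₁) (hb₁₂ : b₁ ≤ b₂)
    (hcover : ∀ x ∈ sphere (0 : E) 1, ∃ y ∈ s, ‖x - y‖ ≤ netRadius b₁ b₂)
    (hs : ∀ y ∈ s, ‖T y‖ ^ 2 ∈ Set.Icc b₁ b₂) {x : E} (hx : x ∈ sphere (0 : E) 1) :
    ‖T x‖ ^ 2 ∈ Set.Icc (0.8 * b₁) (1.4 * b₂) := by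
  have hb₂ : 0 < b₂ := hb₁.trans_le hb₁₂
  have hε₀ := (netRadius_pos hb₁ hb₁₂).le
  have hε₁ := netRadius_le hb₁ hb₁₂
  have hεβ : netRadius b₁ b₂ * √b₂ = 0.09 * √b₁ := by
    rw [netRadius_eq hb₁.le, div_mul_cancel₀ _ (by positivity)]
  have hupper : (1 - netRadius b₁ b₂) * ‖T‖ ≤ √b₂ :=
    one_sub_mul_opNorm_le_of_sphere_cover hε₀ hcover (Real.sqrt_nonneg _) fun y hy =>
      Real.le_sqrt_of_sq_le (hs y hy).2
  have hlower : √b₁ - netRadius b₁ b₂ * ‖T‖ ≤ ‖T x‖ :=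
    sub_mul_opNorm_le_norm_apply_of_sphere_cover hcover
      (fun y hy => (Real.sqrt_le_left (norm_nonneg _)).2 (hs y hy).1) hx
  have hTx : ‖T x‖ ≤ ‖T‖ := T.unit_le_opNorm x (by simpa using hx.le)
  have hTx_le : 0.91 * ‖T x‖ ≤ √b₂ := by nlinarith [norm_nonneg T]
  have hTx_ge : 0.82 * √b₁ ≤ 0.91 * ‖T x‖ := by
    nlinarith [mul_le_mul_of_nonneg_left hupper hε₀,
      mul_nonneg (mul_nonneg hε₀ (sub_nonneg.2 hε₁)) (norm_nonneg T)]
  have hsq_le := pow_le_pow_left₀ (by positivity) hTx_le 2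
  have hsq_ge := pow_le_pow_left₀ (by positivity) hTx_ge 2
  rw [mul_pow, Real.sq_sqrt hb₂.le] at hsq_le
  rw [mul_pow, Real.sq_sqrt hb₁.le] at hsq_ge
  constructor <;> nlinarith

end NetExtension

lemma ofReal_one_sub_le_measure_compl_biUnion {Ω ι : Type*} [MeasurableSpace Ω] (P : Measure Ω)
    [IsProbabilityMeasure P] (s : Finset ι) (B : ι → Set Ω) {p C : ℝ} (hp : 0 ≤ p)
    (hC : (#s : ℝ) ≤ C) (hB : ∀ i ∈ s, P (B i) ≤ ENNReal.ofReal p) :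
    ENNReal.ofReal (1 - C * p) ≤ P (⋃ i ∈ s, B i)ᶜ := by
  have hCp : 0 ≤ C * p := mul_nonneg ((Nat.cast_nonneg _).trans hC) hp
  have hunion : P (⋃ i ∈ s, B i) ≤ ENNReal.ofReal (C * p) :=
    calc P (⋃ i ∈ s, B i) ≤ ∑ i ∈ s, P (B i) := measure_biUnion_finset_le s B
      _ ≤ #s * ENNReal.ofReal p := by simpa using Finset.sum_le_sum hB
      _ ≤ ENNReal.ofReal (C * p) := by
        rw [ENNReal.ofReal_mul ((Nat.cast_nonneg _).trans hC), ← ENNReal.ofReal_natCast]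
        gcongr
  have hsplit : 1 ≤ P (⋃ i ∈ s, B i)ᶜ + P (⋃ i ∈ s, B i) :=
    calc 1 = P ((⋃ i ∈ s, B i)ᶜ ∪ ⋃ i ∈ s, B i) := by rw [Set.compl_union_self, measure_univ]
      _ ≤ _ := measure_union_le _ _
  calc ENNReal.ofReal (1 - C * p) = 1 - ENNReal.ofReal (C * p) := by
        rw [ENNReal.ofReal_sub _ hCp, ENNReal.ofReal_one]
    _ ≤ 1 - P (⋃ i ∈ s, B i) := tsub_le_tsub_left hunion 1
    _ ≤ P (⋃ i ∈ s, B i)ᶜ := tsub_le_iff_right.2 hsplit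

attribute [local instance] Matrix.frobeniusNormedAddCommGroup Matrix.frobeniusNormedSpace

section FrobeniusPairing

variable {m n κ ι : Type*} [Fintype m] [Fintype n] [Fintype κ] [Fintype ι]

lemma frob_eq_norm (A : Matrix m n ℝ) : frob A = ‖A‖ := by
  simp [frob, Matrix.frobenius_norm_def, Real.sqrt_eq_rpow]

lemma frobenius_norm_sq_eq_sum_sq (A : Matrix m n ℝ) : ‖A‖ ^ 2 = ∑ i, ∑ j, A i j ^ 2 := by
  rw [← frob_eq_norm, frob, Real.sq_sqrt (by positivity)]

def frobeniusPairing (A : κ → ι → m → n → ℝ) : Matrix m n ℝ →ₗ[ℝ] Matrix κ ι ℝ where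
  toFun W := Matrix.of fun k i => ∑ a, ∑ b, A k i a b * W a b
  map_add' W W' := by ext; simp [mul_add, Finset.sum_add_distrib]
  map_smul' c W := by ext; simp [Finset.mul_sum, mul_left_comm]

lemma norm_frobeniusPairing_sq (A : κ → ι → m → n → ℝ) (W : Matrix m n ℝ) :
    ‖frobeniusPairing A W‖ ^ 2 = ∑ k, ∑ i, (∑ a, ∑ b, A k i a b * W a b) ^ 2 :=
  frobenius_norm_sq_eq_sum_sq _

end FrobeniusPairing

theorem prop45_general (n r q m : ℕ)
    (b₁ b₂ p₀ : ℝ) (hb1 : 0 < b₁) (hb12 : b₁ ≤ b₂) (hp0 : 0 ≤ p₀)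
    (Ω : Type) [MeasurableSpace Ω] (P : Measure Ω) [IsProbabilityMeasure P]
    (M : Ω → Fin q → Fin m → Fin n → Fin r → ℝ)
    (h : ∀ W : Matrix (Fin n) (Fin r) ℝ, frob W = 1 →
      P {ω | ¬ (b₁ ≤ ∑ k, ∑ i, (∑ a, ∑ b, M ω k i a b * W a b) ^ 2 ∧
               ∑ k, ∑ i, (∑ a, ∑ b, M ω k i a b * W a b) ^ 2 ≤ b₂)} ≤ ENNReal.ofReal p₀) :
    ENNReal.ofReal (1 - (33 * b₂ / b₁) ^ (n * r) * p₀) ≤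
      P {ω | ∀ W : Matrix (Fin n) (Fin r) ℝ, frob W = 1 →
        0.8 * b₁ ≤ ∑ k, ∑ i, (∑ a, ∑ b, M ω k i a b * W a b) ^ 2 ∧
        ∑ k, ∑ i, (∑ a, ∑ b, M ω k i a b * W a b) ^ 2 ≤ 1.4 * b₂} := by
  obtain ⟨s, hs_sphere, hs_card, hs_cover⟩ :=
    exists_finset_sphere_cover (E := Matrix (Fin n) (Fin r) ℝ) (netRadius_pos hb1 hb12)
  have hcard : (#s : ℝ) ≤ (33 * b₂ / b₁) ^ (n * r) := by
    refine hs_card.trans ?_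
    rw [finrank_matrix, finrank_self, mul_one, Fintype.card_fin, Fintype.card_fin]
    have hε := netRadius_pos hb1 hb12
    exact pow_le_pow_left₀ (by positivity) (one_add_two_div_netRadius_le hb1 hb12) _
  refine (ofReal_one_sub_le_measure_compl_biUnion P s _ hp0 hcard fun W hW =>
    h W ?_).trans (measure_mono fun ω hω W hW => ?_)
  · rw [frob_eq_norm, ← mem_sphere_zero_iff_norm]; exact hs_sphere hW
  · have hnet : ∀ y ∈ s, ‖frobeniusPairing (M ω) y‖ ^ 2 ∈ Set.Icc b₁ b₂ := fun y hy => by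
      rw [norm_frobeniusPairing_sq]
      by_contra hbad
      exact hω (Set.mem_biUnion hy hbad)
    have hW' : W ∈ sphere (0 : Matrix (Fin n) (Fin r) ℝ) 1 := by
      rwa [mem_sphere_zero_iff_norm, ← frob_eq_norm]
    simpa only [LinearMap.coe_toContinuousLinearMap', norm_frobeniusPairing_sq, Set.mem_Icc] using
      sq_norm_apply_mem_Icc_of_netRadius_cover
        (T := LinearMap.toContinuousLinearMap (frobeniusPairing (M ω))) hb1 hb12 hs_cover hnet hW'

/-- **Proposition 4.5** (epsilon-net extension for two-sided bounds on a random
quadratic form). -/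
theorem prop45 (n r q m : ℕ) (hn : 1 ≤ n) (hr : 1 ≤ r) (hq : 1 ≤ q) (hm : 1 ≤ m)
    (b₁ b₂ p₀ : ℝ) (hb1 : 0 < b₁) (hb12 : b₁ ≤ b₂) (hp0 : 0 ≤ p₀) (hp1 : p₀ ≤ 1)
    (Ω : Type) [MeasurableSpace Ω] (P : Measure Ω) [IsProbabilityMeasure P]
    (M : Ω → Fin q → Fin m → Fin n → Fin r → ℝ) (hM : Measurable M)
    (h : ∀ W : Matrix (Fin n) (Fin r) ℝ, frob W = 1 →
      P {ω | ¬ (b₁ ≤ ∑ k, ∑ i, (∑ a, ∑ b, M ω k i a b * W a b) ^ 2 ∧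
               ∑ k, ∑ i, (∑ a, ∑ b, M ω k i a b * W a b) ^ 2 ≤ b₂)} ≤ ENNReal.ofReal p₀) :
    ENNReal.ofReal (1 - (33 * b₂ / b₁) ^ (n * r) * p₀) ≤
      P {ω | ∀ W : Matrix (Fin n) (Fin r) ℝ, frob W = 1 →
        0.8 * b₁ ≤ ∑ k, ∑ i, (∑ a, ∑ b, M ω k i a b * W a b) ^ 2 ∧
        ∑ k, ∑ i, (∑ a, ∑ b, M ω k i a b * W a b) ^ 2 ≤ 1.4 * b₂} :=
  prop45_general n r q m b₁ b₂ p₀ hb1 hb12 hp0 Ω P M h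
end
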